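/- arXiv:0804.1460 — 3 statements merged into one kernel-verified Lean document; each statement's English description precedes it below -/
import Mathlib

section
/- For a monad (R, m, i) on a category A, the multiplication m : RR → R has a natural section m̂ : R → RR satisfying Rm ∘ m̂R = m̂ ∘ m = mR ∘ Rm̂ if and only if the forgetful functor from the Eilenberg–Moore category of R-modules to A is separable. -/
/-!
By Rafael's theorem, a right adjoint is separable exactly when the counit of the adjunction is a
split natural epimorphism. For `free ⊣ forget` the counit at a module `(M, a)` is `a` itself.
A natural section `σ` of it gives `mhat X := σ (R X, μ X)`: `σ` being `R`-linear is the left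
identity, its naturality with respect to the module map `μ X` is the right one. Conversely
`mhat` gives the section `mhat ⊗_R M : M → R M` of `a`; it is `R`-linear because `mhat` is a
bimodule map.
-/

open CategoryTheory

/-- A functor `F : B ⥤ A` is separable if the natural transformation of Hom-bifunctors
`f ↦ F f` is a split natural monomorphism, i.e. it has a natural retraction. -/
def SeparableFunctor {B A : Type*} [Category B] [Category A] (F : B ⥤ A) : Prop :=
  ∃ ζ : ∀ X Y : B, (F.obj X ⟶ F.obj Y) → (X ⟶ Y),
    (∀ (X Y : B) (f : X ⟶ Y), ζ X Y (F.map f) = f) ∧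
    ∀ (X' X Y Y' : B) (g : X' ⟶ X) (h : Y ⟶ Y') (p : F.obj X ⟶ F.obj Y),
      ζ X' Y' (F.map g ≫ p ≫ F.map h) = g ≫ ζ X Y p ≫ h

namespace CategoryTheory

/-- Rafael's theorem. -/
theorem Adjunction.separableFunctor_iff_isSplitEpi_counit {C D : Type*} [Category C] [Category D]
    {F : C ⥤ D} {G : D ⥤ C} (adj : F ⊣ G) : SeparableFunctor G ↔ IsSplitEpi adj.counit := by
  constructor
  · rintro ⟨ζ, hζ_map, hζ_natural⟩
    have hζ_left : ∀ (X' X Y : D) (g : X' ⟶ X) (p : G.obj X ⟶ G.obj Y),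
        ζ X' Y (G.map g ≫ p) = g ≫ ζ X Y p := by
      intro X' X Y g p
      simpa using hζ_natural X' X Y Y g (𝟙 Y) p
    have hζ_right : ∀ (X Y Y' : D) (h : Y ⟶ Y') (p : G.obj X ⟶ G.obj Y),
        ζ X Y' (p ≫ G.map h) = ζ X Y p ≫ h := by
      intro X Y Y' h p
      simpa using hζ_natural X X Y Y' (𝟙 X) h p
    refine IsSplitEpi.mk'
      { section_ :=
          { app := fun X => ζ X (F.obj (G.obj X)) (adj.unit.app (G.obj X))
            naturality := fun X Y f => ?_ }
        id := ?_ }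
    · dsimp only [Functor.id_obj, Functor.comp_obj, Functor.id_map, Functor.comp_map]
      rw [← hζ_left, ← hζ_right, adj.unit_naturality]
    · ext X
      dsimp only [Functor.id_obj, NatTrans.comp_app, Functor.comp_obj, NatTrans.id_app]
      rw [← hζ_right, adj.right_triangle_components, ← G.map_id, hζ_map]
  · rintro ⟨⟨σ, hσ⟩⟩
    have hσ_app (X : D) : σ.app X ≫ adj.counit.app X = 𝟙 X := NatTrans.congr_app hσ X
    refine ⟨fun X Y p => σ.app X ≫ F.map p ≫ adj.counit.app Y, fun X Y f => ?_, ?_⟩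
    · dsimp only
      rw [adj.counit_naturality, reassoc_of% hσ_app X]
    · intro X' X Y Y' g h p
      simp only [Functor.map_comp, Category.assoc, adj.counit_naturality]
      have hσ_natural : σ.app X' ≫ F.map (G.map g) = g ≫ σ.app X := (σ.naturality g).symm
      rw [reassoc_of% hσ_natural]

namespace Monad

variable {A : Type*} [Category A] {R : Monad A}

@[simp]
lemma adj_counit_app_f (M : R.Algebra) : (R.adj.counit.app M).f = M.a := by
  simp only [adj_counit]
  rfl

section SplitCounit

variable (mhat : (R : A ⥤ A) ⟶ (R : A ⥤ A) ⋙ (R : A ⥤ A))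

/-- `mhat ⊗_R M`, read through `R ⊗_R M ≅ M`. -/
def counitSection (M : R.Algebra) : M.A ⟶ R.obj M.A :=
  R.η.app M.A ≫ mhat.app M.A ≫ R.map M.a

lemma counitSection_comp_a (hsec : ∀ X : A, mhat.app X ≫ R.μ.app X = 𝟙 (R.obj X))
    (M : R.Algebra) : counitSection mhat M ≫ M.a = 𝟙 M.A := by
  rw [counitSection, Category.assoc, Category.assoc, ← M.assoc, reassoc_of% hsec, M.unit]

lemma map_counitSection_comp_μ
    (hleft : ∀ X : A, R.μ.app X ≫ mhat.app X = R.map (mhat.app X) ≫ R.μ.app (R.obj X))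
    (M : R.Algebra) :
    R.map (counitSection mhat M) ≫ R.μ.app M.A = mhat.app M.A ≫ R.map M.a := by
  simp only [counitSection, Functor.map_comp, Category.assoc]
  rw [R.mu_naturality, ← reassoc_of% hleft, R.right_unit_assoc]

lemma a_comp_counitSection
    (hright : ∀ X : A, mhat.app (R.obj X) ≫ R.map (R.μ.app X) = R.μ.app X ≫ mhat.app X)
    (M : R.Algebra) : M.a ≫ counitSection mhat M = mhat.app M.A ≫ R.map M.a := by
  rw [counitSection, R.unit_naturality_assoc, mhat.naturality_assoc, Functor.comp_map,
    ← Functor.map_comp, ← M.assoc, Functor.map_comp, reassoc_of% hright, R.left_unit_assoc]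

lemma counitSection_naturality {M N : R.Algebra} (f : M ⟶ N) :
    f.f ≫ counitSection mhat N = counitSection mhat M ≫ R.map f.f := by
  simp only [counitSection, Category.assoc]
  rw [R.unit_naturality_assoc, mhat.naturality_assoc, Functor.comp_map, ← Functor.map_comp, f.h,
    Functor.map_comp]

def counitSplitEpi (hsec : ∀ X : A, mhat.app X ≫ R.μ.app X = 𝟙 (R.obj X))
    (hright : ∀ X : A, mhat.app (R.obj X) ≫ R.map (R.μ.app X) = R.μ.app X ≫ mhat.app X)
    (hleft : ∀ X : A, R.μ.app X ≫ mhat.app X = R.map (mhat.app X) ≫ R.μ.app (R.obj X)) :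
    SplitEpi R.adj.counit where
  section_ :=
    { app := fun M =>
        { f := counitSection mhat M
          h := (map_counitSection_comp_μ mhat hleft M).trans
            (a_comp_counitSection mhat hright M).symm }
      naturality := fun _ _ f => by
        ext
        exact counitSection_naturality mhat f }
  id := by
    ext M
    simp only [NatTrans.comp_app, Algebra.comp_f, adj_counit_app_f, NatTrans.id_app, Algebra.id_f]
    exact counitSection_comp_a mhat hsec M

end SplitCounit

theorem isSplitEpi_adj_counit_iff : IsSplitEpi R.adj.counit ↔
    ∃ mhat : (R : A ⥤ A) ⟶ ((R : A ⥤ A) ⋙ (R : A ⥤ A)),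
      (∀ X : A, mhat.app X ≫ R.μ.app X = 𝟙 ((R : A ⥤ A).obj X)) ∧
      (∀ X : A, mhat.app ((R : A ⥤ A).obj X) ≫ (R : A ⥤ A).map (R.μ.app X) =
        R.μ.app X ≫ mhat.app X) ∧
      (∀ X : A, R.μ.app X ≫ mhat.app X =
        (R : A ⥤ A).map (mhat.app X) ≫ R.μ.app ((R : A ⥤ A).obj X)) := by
  constructor
  · rintro ⟨⟨σ, hσ⟩⟩
    refine ⟨{ app := fun X => (σ.app (R.free.obj X)).f
              naturality := fun X Y f => congrArg Algebra.Hom.f (σ.naturality (R.free.map f)) },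
      fun X => ?_, fun X => ?_, fun X => (σ.app (R.free.obj X)).h.symm⟩
    · have h := congrArg Algebra.Hom.f (NatTrans.congr_app hσ (R.free.obj X))
      simp only [NatTrans.comp_app, Algebra.comp_f, adj_counit_app_f, NatTrans.id_app,
        Algebra.id_f] at h
      exact h
    · have h := congrArg Algebra.Hom.f (σ.naturality (R.adj.counit.app (R.free.obj X)))
      simp only [Algebra.comp_f, Functor.id_map, Functor.comp_map, forget_map,
        adj_counit_app_f] at h
      exact h.symm
  · rintro ⟨mhat, hsec, hright, hleft⟩
    exact ⟨⟨counitSplitEpi mhat hsec hright hleft⟩⟩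

end Monad

end CategoryTheory

/-- For a monad `(R, m, i)` on a category `A`, the multiplication `m` has a natural section
`m̂ : R ⟶ RR` satisfying `Rm ∘ m̂R = m̂ ∘ m = mR ∘ Rm̂` if and only if the forgetful functor
from Eilenberg–Moore `R`-modules to `A` is separable. -/
theorem separable_monad_iff_forget_separable {A : Type*} [Category A] (R : Monad A) :
    (∃ mhat : (R : A ⥤ A) ⟶ ((R : A ⥤ A) ⋙ (R : A ⥤ A)),
      (∀ X : A, mhat.app X ≫ R.μ.app X = 𝟙 ((R : A ⥤ A).obj X)) ∧
      (∀ X : A, mhat.app ((R : A ⥤ A).obj X) ≫ (R : A ⥤ A).map (R.μ.app X) =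
        R.μ.app X ≫ mhat.app X) ∧
      (∀ X : A, R.μ.app X ≫ mhat.app X =
        (R : A ⥤ A).map (mhat.app X) ≫ R.μ.app ((R : A ⥤ A).obj X)))
    ↔ SeparableFunctor R.forget :=
  Monad.isSplitEpi_adj_counit_iff.symm.trans R.adj.separableFunctor_iff_isSplitEpi_counit.symm
end

section
/- Let L : A → A be a comonad with right adjoint monad R : A → A on a category A. Then the forgetful functor U^L : A^L → A from L-comodules is separable if and only if the forgetful functor U_R : A_R → A from R-modules is separable. Moreover, if these equivalent conditions hold, then every L-comodule is injective relative to U^L and every R-module is projective relative to U_R. -/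
/-!
Rafael's criterion: a left adjoint is separable iff its unit has a natural retraction, and a
right adjoint iff its counit has a natural section. For `G.forget ⊣ G.cofree` such a retraction
amounts to a `G`-bicolinear natural retraction `e` of `δ` (`e X` is its carrier at the cofree
coalgebra on `X`), and for `T.free ⊣ T.forget` such a section amounts to a `T`-bilinear natural
section of `μ`. Conjugation along `G ⊣ T` is a bijection `(G ⋙ G ⟶ G) ≃ (T ⟶ T ⋙ T)` that
respects composition and whiskering and sends `δ` to `μ`, so it exchanges the two conditions.
For relative injectivity, if `ζ` retracts `U` and `U f ≫ r = 𝟙`, then `ζ (r ≫ U g)` extends `g`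
along `f`; projectivity is dual.
-/

open CategoryTheory

/-- An object `M` of `B` is injective relative to a functor `U : B ⥤ A` if `Hom(f, M)` is
surjective for every morphism `f` of `B` such that `U f` is a split monomorphism. -/
def RelInjective {B A : Type*} [Category B] [Category A] (U : B ⥤ A) (M : B) : Prop :=
  ∀ {Y Z : B} (f : Y ⟶ Z),
    (∃ r : U.obj Z ⟶ U.obj Y, U.map f ≫ r = 𝟙 (U.obj Y)) →
    ∀ g : Y ⟶ M, ∃ h : Z ⟶ M, f ≫ h = g

/-- An object `M` of `B` is projective relative to a functor `U : B ⥤ A` if `Hom(M, f)` is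
surjective for every morphism `f` of `B` such that `U f` is a split epimorphism. -/
def RelProjective {B A : Type*} [Category B] [Category A] (U : B ⥤ A) (M : B) : Prop :=
  ∀ {Y Z : B} (f : Y ⟶ Z),
    (∃ s : U.obj Z ⟶ U.obj Y, s ≫ U.map f = 𝟙 (U.obj Z)) →
    ∀ g : M ⟶ Z, ∃ h : M ⟶ Y, h ≫ f = g

open CategoryTheory.Functor (whiskerLeft whiskerRight)

theorem separableFunctor_iff {B A : Type*} [Category B] [Category A] (F : B ⥤ A) :
    SeparableFunctor F ↔ ∃ ζ : ∀ X Y : B, (F.obj X ⟶ F.obj Y) → (X ⟶ Y),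
      (∀ (X Y : B) (f : X ⟶ Y), ζ X Y (F.map f) = f) ∧
      (∀ (X' X Y : B) (g : X' ⟶ X) (p : F.obj X ⟶ F.obj Y),
        ζ X' Y (F.map g ≫ p) = g ≫ ζ X Y p) ∧
      ∀ (X Y Y' : B) (h : Y ⟶ Y') (p : F.obj X ⟶ F.obj Y),
        ζ X Y' (p ≫ F.map h) = ζ X Y p ≫ h := by
  refine exists_congr fun ζ => and_congr_right fun _ => ⟨fun h => ⟨?_, ?_⟩, ?_⟩
  · intro X' X Y g p
    simpa using h X' X Y Y g (𝟙 Y) p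
  · intro X Y Y' k p
    simpa using h X X Y Y' (𝟙 X) k p
  · rintro ⟨hl, hr⟩ X' X Y Y' g k p
    rw [hl, hr]

namespace SeparableFunctor

variable {B A : Type*} [Category B] [Category A] {U : B ⥤ A}

theorem relInjective (h : SeparableFunctor U) (M : B) : RelInjective U M := by
  obtain ⟨ζ, hζ, hζl, -⟩ := (separableFunctor_iff U).1 h
  rintro Y Z f ⟨r, hr⟩ g
  refine ⟨ζ Z M (r ≫ U.map g), ?_⟩
  rw [← hζl, ← Category.assoc, hr, Category.id_comp, hζ]

theorem relProjective (h : SeparableFunctor U) (M : B) : RelProjective U M := by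
  obtain ⟨ζ, hζ, -, hζr⟩ := (separableFunctor_iff U).1 h
  rintro Y Z f ⟨s, hs⟩ g
  refine ⟨ζ M Y (U.map g ≫ s), ?_⟩
  rw [← hζr, Category.assoc, hs, Category.comp_id, hζ]

end SeparableFunctor

namespace CategoryTheory.Adjunction

theorem comp_assoc {A B C D : Type*} [Category A] [Category B] [Category C] [Category D]
    {F₁ : A ⥤ B} {G₁ : B ⥤ A} {F₂ : B ⥤ C} {G₂ : C ⥤ B} {F₃ : C ⥤ D} {G₃ : D ⥤ C}
    (adj₁ : F₁ ⊣ G₁) (adj₂ : F₂ ⊣ G₂) (adj₃ : F₃ ⊣ G₃) :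
    (adj₁.comp adj₂).comp adj₃ = adj₁.comp (adj₂.comp adj₃) := by
  ext
  simp

variable {A B : Type*} [Category A] [Category B] {L : B ⥤ A} {R : A ⥤ B} (adj : L ⊣ R)

theorem separableFunctor_left_iff :
    SeparableFunctor L ↔ ∃ ν : L ⋙ R ⟶ 𝟭 B, adj.unit ≫ ν = 𝟙 _ := by
  constructor
  · intro h
    obtain ⟨ζ, hζ, hζl, hζr⟩ := (separableFunctor_iff L).1 h
    refine ⟨{ app Y := ζ _ _ (adj.counit.app (L.obj Y)), naturality := fun Y Y' f => ?_ }, ?_⟩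
    · simp [← hζl, ← hζr]
    · ext Y
      dsimp
      rw [← hζl, adj.left_triangle_components, ← L.map_id, hζ]
  · rintro ⟨ν, hν⟩
    refine ⟨fun X Y p => adj.unit.app X ≫ R.map p ≫ ν.app Y, fun X Y f => ?_,
      fun X' X Y Y' g h p => ?_⟩
    · dsimp only
      rw [adj.unit_naturality_assoc, ← NatTrans.comp_app, hν, NatTrans.id_app]
      exact Category.comp_id f
    · have hνh := ν.naturality h
      dsimp at hνh
      simp only [Functor.map_comp, Category.assoc, adj.unit_naturality_assoc, hνh]

theorem separableFunctor_right_iff :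
    SeparableFunctor R ↔ ∃ σ : 𝟭 A ⟶ R ⋙ L, σ ≫ adj.counit = 𝟙 _ := by
  constructor
  · intro h
    obtain ⟨ζ, hζ, hζl, hζr⟩ := (separableFunctor_iff R).1 h
    refine ⟨{ app X := ζ _ _ (adj.unit.app (R.obj X)), naturality := fun X X' f => ?_ }, ?_⟩
    · simp [← hζl, ← hζr]
    · ext X
      dsimp
      rw [← hζr, adj.right_triangle_components, ← R.map_id, hζ]
  · rintro ⟨σ, hσ⟩
    refine ⟨fun X Y p => σ.app X ≫ L.map p ≫ adj.counit.app Y, fun X Y f => ?_,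
      fun X' X Y Y' g h p => ?_⟩
    · dsimp only
      rw [adj.counit_naturality, ← NatTrans.comp_app_assoc, hσ, NatTrans.id_app]
      exact Category.id_comp f
    · have hσg := σ.naturality g
      dsimp at hσg
      simp only [Functor.map_comp, Category.assoc, adj.counit_naturality, reassoc_of% hσg]

end CategoryTheory.Adjunction

namespace CategoryTheory.Comonad

variable {A : Type*} [Category A] (G : Comonad A)

def IsCoseparable : Prop :=
  ∃ e : (G : A ⥤ A) ⋙ (G : A ⥤ A) ⟶ (G : A ⥤ A), G.δ ≫ e = 𝟙 _ ∧
    e ≫ G.δ = whiskerLeft (G : A ⥤ A) G.δ ≫ whiskerRight e (G : A ⥤ A) ∧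
    whiskerRight G.δ (G : A ⥤ A) ≫ whiskerLeft (G : A ⥤ A) e = e ≫ G.δ

theorem IsCoseparable.exists_unit_retraction (h : G.IsCoseparable) :
    ∃ ν : G.forget ⋙ G.cofree ⟶ 𝟭 _, G.adj.unit ≫ ν = 𝟙 _ := by
  obtain ⟨e, he₁, he₂, he₃⟩ := h
  have δe (X : A) : G.δ.app X ≫ e.app X = 𝟙 _ := by simpa using congr_app he₁ X
  have eδ (X : A) : e.app X ≫ G.δ.app X = G.δ.app (G.obj X) ≫ G.map (e.app X) := by
    simpa using congr_app he₂ X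
  have Gδe (X : A) : G.map (G.δ.app X) ≫ e.app (G.obj X) = e.app X ≫ G.δ.app X := by
    simpa using congr_app he₃ X
  have e_nat {X Y : A} (f : X ⟶ Y) : G.map (G.map f) ≫ e.app Y = e.app X ≫ G.map f :=
    e.naturality f
  let ν (M : G.Coalgebra) : G.cofree.obj M.A ⟶ M :=
    { f := G.map M.a ≫ e.app M.A ≫ G.ε.app M.A
      h := by
        calc G.δ.app M.A ≫ G.map (G.map M.a ≫ e.app M.A ≫ G.ε.app M.A)
            = G.map M.a ≫ e.app M.A := by
              rw [G.map_comp, G.map_comp, ← G.delta_naturality_assoc, ← reassoc_of% (eδ M.A),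
                G.right_counit, Category.comp_id]
          _ = (G.map M.a ≫ e.app M.A ≫ G.ε.app M.A) ≫ M.a := by
              rw [Category.assoc, Category.assoc, ← G.counit_naturality,
                ← reassoc_of% (e_nat M.a), ← G.map_comp_assoc, ← M.coassoc, G.map_comp_assoc,
                reassoc_of% (Gδe M.A), G.left_counit, Category.comp_id] }
  refine ⟨{ app M := ν M, naturality := fun M N g => ?_ }, ?_⟩
  · ext
    change G.map g.f ≫ G.map N.a ≫ e.app N.A ≫ G.ε.app N.A =
      (G.map M.a ≫ e.app M.A ≫ G.ε.app M.A) ≫ g.f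
    rw [← G.map_comp_assoc, ← g.h, G.map_comp_assoc, reassoc_of% (e_nat g.f),
      G.counit_naturality, Category.assoc, Category.assoc]
  · ext M
    rw [NatTrans.comp_app, adj_unit]
    change M.a ≫ G.map M.a ≫ e.app M.A ≫ G.ε.app M.A = 𝟙 M.A
    rw [← M.coassoc_assoc, reassoc_of% (δe M.A), M.counit]

theorem isCoseparable_of_unit_retraction {ν : G.forget ⋙ G.cofree ⟶ 𝟭 _}
    (hν : G.adj.unit ≫ ν = 𝟙 _) : G.IsCoseparable := by
  have ν_nat {M N : G.Coalgebra} (g : M ⟶ N) :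
      G.map g.f ≫ (ν.app N).f = (ν.app M).f ≫ g.f :=
    congrArg Coalgebra.Hom.f (ν.naturality g)
  refine ⟨{ app X := (ν.app (G.cofree.obj X)).f
            naturality := fun X Y f => ν_nat (G.cofree.map f) }, ?_, ?_, ?_⟩
  · ext X
    have hνX := congr_app hν (G.cofree.obj X)
    rw [adj_unit] at hνX
    exact congrArg Coalgebra.Hom.f hνX
  · ext X
    exact (ν.app (G.cofree.obj X)).h.symm
  · ext X
    exact ν_nat (⟨G.δ.app X, G.coassoc X⟩ : G.cofree.obj X ⟶ G.cofree.obj (G.obj X))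

theorem separableFunctor_forget_iff : SeparableFunctor G.forget ↔ G.IsCoseparable := by
  rw [G.adj.separableFunctor_left_iff]
  exact ⟨fun ⟨_, hν⟩ => G.isCoseparable_of_unit_retraction hν,
    IsCoseparable.exists_unit_retraction G⟩

end CategoryTheory.Comonad

namespace CategoryTheory.Monad

variable {A : Type*} [Category A] (T : Monad A)

def IsSeparable : Prop :=
  ∃ s : (T : A ⥤ A) ⟶ (T : A ⥤ A) ⋙ (T : A ⥤ A), s ≫ T.μ = 𝟙 _ ∧
    T.μ ≫ s = whiskerRight s (T : A ⥤ A) ≫ whiskerLeft (T : A ⥤ A) T.μ ∧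
    whiskerLeft (T : A ⥤ A) s ≫ whiskerRight T.μ (T : A ⥤ A) = T.μ ≫ s

theorem IsSeparable.exists_counit_section (h : T.IsSeparable) :
    ∃ σ : 𝟭 _ ⟶ T.forget ⋙ T.free, σ ≫ T.adj.counit = 𝟙 _ := by
  obtain ⟨s, hs₁, hs₂, hs₃⟩ := h
  have sμ (X : A) : s.app X ≫ T.μ.app X = 𝟙 _ := by simpa using congr_app hs₁ X
  have μs (X : A) : T.μ.app X ≫ s.app X = T.map (s.app X) ≫ T.μ.app (T.obj X) := by
    simpa using congr_app hs₂ X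
  have sTμ (X : A) : s.app (T.obj X) ≫ T.map (T.μ.app X) = T.μ.app X ≫ s.app X := by
    simpa using congr_app hs₃ X
  have s_nat {X Y : A} (f : X ⟶ Y) : T.map f ≫ s.app Y = s.app X ≫ T.map (T.map f) :=
    s.naturality f
  let σ (N : T.Algebra) : N ⟶ T.free.obj N.A :=
    { f := T.η.app N.A ≫ s.app N.A ≫ T.map N.a
      h := by
        calc T.map (T.η.app N.A ≫ s.app N.A ≫ T.map N.a) ≫ T.μ.app N.A
            = s.app N.A ≫ T.map N.a := by
              rw [T.map_comp, T.map_comp, Category.assoc, Category.assoc, T.mu_naturality,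
                ← reassoc_of% (μs N.A), reassoc_of% (T.right_unit N.A)]
          _ = N.a ≫ T.η.app N.A ≫ s.app N.A ≫ T.map N.a := by
              rw [T.unit_naturality_assoc, reassoc_of% (s_nat N.a), ← T.map_comp, ← N.assoc,
                T.map_comp, reassoc_of% (sTμ N.A), reassoc_of% (T.left_unit N.A)] }
  refine ⟨{ app N := σ N, naturality := fun M N g => ?_ }, ?_⟩
  · ext
    change g.f ≫ T.η.app N.A ≫ s.app N.A ≫ T.map N.a =
      (T.η.app M.A ≫ s.app M.A ≫ T.map M.a) ≫ T.map g.f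
    rw [Category.assoc, Category.assoc, ← T.map_comp, ← g.h, T.map_comp,
      ← reassoc_of% (s_nat g.f), T.unit_naturality_assoc]
  · ext N
    rw [NatTrans.comp_app, adj_counit]
    change (T.η.app N.A ≫ s.app N.A ≫ T.map N.a) ≫ N.a = 𝟙 N.A
    rw [Category.assoc, Category.assoc, ← N.assoc, reassoc_of% (sμ N.A), N.unit]

theorem isSeparable_of_counit_section {σ : 𝟭 _ ⟶ T.forget ⋙ T.free}
    (hσ : σ ≫ T.adj.counit = 𝟙 _) : T.IsSeparable := by
  have σ_nat {M N : T.Algebra} (g : M ⟶ N) : g.f ≫ (σ.app N).f = (σ.app M).f ≫ T.map g.f :=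
    congrArg Algebra.Hom.f (σ.naturality g)
  refine ⟨{ app X := (σ.app (T.free.obj X)).f
            naturality := fun X Y f => σ_nat (T.free.map f) }, ?_, ?_, ?_⟩
  · ext X
    have hσX := congr_app hσ (T.free.obj X)
    rw [adj_counit] at hσX
    exact congrArg Algebra.Hom.f hσX
  · ext X
    exact (σ.app (T.free.obj X)).h.symm
  · ext X
    exact (σ_nat (⟨T.μ.app X, T.assoc X⟩ : T.free.obj (T.obj X) ⟶ T.free.obj X)).symm

theorem separableFunctor_forget_iff : SeparableFunctor T.forget ↔ T.IsSeparable := by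
  rw [T.adj.separableFunctor_right_iff]
  exact ⟨fun ⟨_, hσ⟩ => T.isSeparable_of_counit_section hσ,
    IsSeparable.exists_counit_section T⟩

end CategoryTheory.Monad

theorem CategoryTheory.Comonad.isCoseparable_iff_isSeparable {A : Type*} [Category A]
    {G : Comonad A} {T : Monad A} (adj : (G : A ⥤ A) ⊣ (T : A ⥤ A))
    (hμ : T.μ = conjugateEquiv (adj.comp adj) adj G.δ) : G.IsCoseparable ↔ T.IsSeparable := by
  refine (conjugateEquiv adj (adj.comp adj)).exists_congr fun e => ?_
  set s := conjugateEquiv adj (adj.comp adj) e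
  have whiskerRight_e : conjugateEquiv (adj.comp adj) (adj.comp (adj.comp adj))
      (whiskerRight e (G : A ⥤ A)) = whiskerLeft (T : A ⥤ A) s := by
    rw [← conjugateEquiv_whiskerRight, Adjunction.comp_assoc]
  have whiskerRight_δ : conjugateEquiv (adj.comp (adj.comp adj)) (adj.comp adj)
      (whiskerRight G.δ (G : A ⥤ A)) = whiskerLeft (T : A ⥤ A) T.μ := by
    rw [hμ, ← conjugateEquiv_whiskerRight, Adjunction.comp_assoc]
  have c₁ : G.δ ≫ e = 𝟙 _ ↔ s ≫ T.μ = 𝟙 _ := by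
    rw [← (conjugateEquiv adj adj).apply_eq_iff_eq,
      ← conjugateEquiv_comp adj (adj.comp adj) adj, conjugateEquiv_id, ← hμ]
  -- conjugation reverses composites, so it exchanges left and right (co)linearity
  have c₂ : e ≫ G.δ = whiskerLeft (G : A ⥤ A) G.δ ≫ whiskerRight e (G : A ⥤ A) ↔
      whiskerLeft (T : A ⥤ A) s ≫ whiskerRight T.μ (T : A ⥤ A) = T.μ ≫ s := by
    rw [← (conjugateEquiv (adj.comp adj) (adj.comp adj)).apply_eq_iff_eq, eq_comm,
      ← conjugateEquiv_comp (adj.comp adj) adj (adj.comp adj), ← hμ,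
      ← conjugateEquiv_comp (adj.comp adj) (adj.comp (adj.comp adj)) (adj.comp adj),
      whiskerRight_e, conjugateEquiv_whiskerLeft, ← hμ]
  have c₃ : whiskerRight G.δ (G : A ⥤ A) ≫ whiskerLeft (G : A ⥤ A) e = e ≫ G.δ ↔
      T.μ ≫ s = whiskerRight s (T : A ⥤ A) ≫ whiskerLeft (T : A ⥤ A) T.μ := by
    rw [← (conjugateEquiv (adj.comp adj) (adj.comp adj)).apply_eq_iff_eq, eq_comm,
      ← conjugateEquiv_comp (adj.comp adj) adj (adj.comp adj), ← hμ,
      ← conjugateEquiv_comp (adj.comp adj) (adj.comp (adj.comp adj)) (adj.comp adj),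
      whiskerRight_δ, conjugateEquiv_whiskerLeft]
  rw [c₁, c₂, c₃]
  exact and_congr_right fun _ => and_comm

theorem forget_separable_iff_and_rel_inj_proj_general {A : Type*} [Category A]
    (G : Comonad A) (T : Monad A) (adj : (G : A ⥤ A) ⊣ (T : A ⥤ A))
    (hμ : T.μ = conjugateEquiv (adj.comp adj) adj G.δ) :
    (SeparableFunctor G.forget ↔ SeparableFunctor T.forget) ∧
    (SeparableFunctor G.forget →
      (∀ M : G.Coalgebra, RelInjective G.forget M) ∧
      (∀ N : T.Algebra, RelProjective T.forget N)) := by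
  have hsep : SeparableFunctor G.forget ↔ SeparableFunctor T.forget := by
    rw [G.separableFunctor_forget_iff, T.separableFunctor_forget_iff,
      Comonad.isCoseparable_iff_isSeparable adj hμ]
  exact ⟨hsep, fun h => ⟨h.relInjective, (hsep.1 h).relProjective⟩⟩

/-- Let `G` be a comonad on `A` whose underlying endofunctor is left adjoint to the underlying
endofunctor of a monad `T`, the monad structure of `T` being the mate of the comonad structure
of `G`.  Then the forgetful functor from `G`-comodules is separable iff the forgetful functor
from `T`-modules is separable; and in that case every `G`-comodule is relative injective and
every `T`-module is relative projective with respect to the forgetful functors. -/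
theorem forget_separable_iff_and_rel_inj_proj {A : Type*} [Category A]
    (G : Comonad A) (T : Monad A) (adj : (G : A ⥤ A) ⊣ (T : A ⥤ A))
    (hμ : T.μ = conjugateEquiv (adj.comp adj) adj G.δ)
    (hη : T.η = conjugateEquiv Adjunction.id adj G.ε) :
    (SeparableFunctor G.forget ↔ SeparableFunctor T.forget) ∧
    (SeparableFunctor G.forget →
      (∀ M : G.Coalgebra, RelInjective G.forget M) ∧
      (∀ N : T.Algebra, RelProjective T.forget N)) :=
  forget_separable_iff_and_rel_inj_proj_general G T adj hμ
end

section
/- Let (L,R) be an adjoint pair of endofunctors on a category A with unit η and counit ε, with L a comonad and R the right adjoint monad, and let φ^L : A → A^L and φ_R : A → A_R denote the cofree and free functors. Then φ^L is separable if and only if φ_R is separable. Explicitly, the counit e of L has a natural section if and only if the unit i of R has a natural retraction, where e = ε ∘ Li and i = Re ∘ η are mates. -/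
/-!
Rafael's theorem, applied to the adjunctions `free ⊣ forget` of `T` and `forget ⊣ cofree` of `G`,
turns separability of `φ_R` into a natural retraction of the unit `i` and separability of `φ^L`
into a natural section of the counit `e`. Since `i` is the conjugate of `e` and conjugation is
a contravariantly functorial bijection, a section `s` of `e` conjugates to a retraction of `i`,
and a retraction of `i` pulls back to a section of `e`.
-/

open CategoryTheory

theorem SeparableFunctor.exists_splitting {B A : Type*} [Category B] [Category A] {F : B ⥤ A}
    (hF : SeparableFunctor F) :
    ∃ ζ : ∀ X Y : B, (F.obj X ⟶ F.obj Y) → (X ⟶ Y),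
      (∀ (X Y : B) (f : X ⟶ Y), ζ X Y (F.map f) = f) ∧
      (∀ (X Y Z : B) (g : X ⟶ Y) (p : F.obj Y ⟶ F.obj Z), ζ X Z (F.map g ≫ p) = g ≫ ζ Y Z p) ∧
      ∀ (X Y Z : B) (p : F.obj X ⟶ F.obj Y) (h : Y ⟶ Z), ζ X Z (p ≫ F.map h) = ζ X Y p ≫ h := by
  obtain ⟨ζ, hζ_map, hζ_nat⟩ := hF
  refine ⟨ζ, hζ_map, fun X Y Z g p => ?_, fun X Y Z p h => ?_⟩
  · simpa using hζ_nat X Y Z Z g (𝟙 Z) p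
  · simpa using hζ_nat X X Y Z (𝟙 X) h p

namespace CategoryTheory.Adjunction

variable {C D : Type*} [Category C] [Category D] {F : C ⥤ D} {U : D ⥤ C}

theorem separableFunctor_left_iff_s7 (adj : F ⊣ U) :
    SeparableFunctor F ↔ ∃ r : F ⋙ U ⟶ 𝟭 C, adj.unit ≫ r = 𝟙 _ := by
  constructor
  · intro hF
    obtain ⟨ζ, hζ_map, hζ_left, hζ_right⟩ := hF.exists_splitting
    refine ⟨{ app X := ζ _ X (adj.counit.app (F.obj X)), naturality X Y f := ?_ }, ?_⟩
    · dsimp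
      rw [← hζ_left, ← hζ_right, adj.counit_naturality]
    · ext X
      dsimp
      rw [← hζ_left, adj.left_triangle_components, ← F.map_id, hζ_map]
  · rintro ⟨r, hr⟩
    have hr_app X : adj.unit.app X ≫ r.app X = 𝟙 X := congr_app hr X
    refine ⟨fun X Y p => adj.unit.app X ≫ U.map p ≫ r.app Y, fun X Y f => ?_,
      fun X' X Y Y' g h p => ?_⟩
    · dsimp only
      rw [adj.unit_naturality_assoc, hr_app, Category.comp_id]
    · have hr_nat := r.naturality h
      dsimp at hr_nat
      simp only [Functor.map_comp, Category.assoc, ← hr_nat]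
      rw [adj.unit_naturality_assoc]

theorem separableFunctor_right_iff_s7 (adj : F ⊣ U) :
    SeparableFunctor U ↔ ∃ s : 𝟭 D ⟶ U ⋙ F, s ≫ adj.counit = 𝟙 _ := by
  constructor
  · intro hU
    obtain ⟨ζ, hζ_map, hζ_left, hζ_right⟩ := hU.exists_splitting
    refine ⟨{ app Y := ζ Y _ (adj.unit.app (U.obj Y)), naturality X Y f := ?_ }, ?_⟩
    · dsimp
      rw [← hζ_left, ← hζ_right, adj.unit_naturality]
    · ext Y
      dsimp
      rw [← hζ_right, adj.right_triangle_components, ← U.map_id, hζ_map]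
  · rintro ⟨s, hs⟩
    have hs_app Y : s.app Y ≫ adj.counit.app Y = 𝟙 Y := congr_app hs Y
    refine ⟨fun X Y p => s.app X ≫ F.map p ≫ adj.counit.app Y, fun X Y f => ?_,
      fun X' X Y Y' g h p => ?_⟩
    · dsimp only
      rw [adj.counit_naturality, reassoc_of% hs_app]
    · have hs_nat := s.naturality g
      dsimp at hs_nat
      simp only [Functor.map_comp, Category.assoc, adj.counit_naturality]
      rw [reassoc_of% hs_nat]

end CategoryTheory.Adjunction

namespace CategoryTheory

theorem Comonad.separableFunctor_cofree_iff {A : Type*} [Category A] (G : Comonad A) :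
    SeparableFunctor G.cofree ↔ ∃ s : 𝟭 A ⟶ (G : A ⥤ A), s ≫ G.ε = 𝟙 (𝟭 A) := by
  rw [G.adj.separableFunctor_right_iff_s7, Comonad.adj_counit]
  rfl

theorem Monad.separableFunctor_free_iff {A : Type*} [Category A] (T : Monad A) :
    SeparableFunctor T.free ↔ ∃ r : (T : A ⥤ A) ⟶ 𝟭 A, T.η ≫ r = 𝟙 (𝟭 A) := by
  rw [T.adj.separableFunctor_left_iff_s7, Monad.adj_unit]
  rfl

theorem exists_section_iff_exists_retraction_conjugateEquiv {C D : Type*} [Category C]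
    [Category D] {L₁ L₂ : C ⥤ D} {R₁ R₂ : D ⥤ C} (adj₁ : L₁ ⊣ R₁) (adj₂ : L₂ ⊣ R₂)
    (α : L₂ ⟶ L₁) :
    (∃ s : L₁ ⟶ L₂, s ≫ α = 𝟙 L₁) ↔ ∃ r : R₂ ⟶ R₁, conjugateEquiv adj₁ adj₂ α ≫ r = 𝟙 R₁ := by
  constructor
  · rintro ⟨s, hs⟩
    exact ⟨conjugateEquiv adj₂ adj₁ s, by rw [conjugateEquiv_comp, hs, conjugateEquiv_id]⟩
  · rintro ⟨r, hr⟩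
    refine ⟨(conjugateEquiv adj₂ adj₁).symm r, (conjugateEquiv adj₁ adj₁).injective ?_⟩
    rw [← conjugateEquiv_comp _ adj₂, Equiv.apply_symm_apply, hr, conjugateEquiv_id]

end CategoryTheory

theorem cofree_separable_iff_free_separable_general {A : Type*} [Category A]
    (G : Comonad A) (T : Monad A) (adj : (G : A ⥤ A) ⊣ (T : A ⥤ A))
    (hη : T.η = conjugateEquiv Adjunction.id adj G.ε) :
    (SeparableFunctor G.cofree ↔ SeparableFunctor T.free) ∧
    ((∃ s : 𝟭 A ⟶ (G : A ⥤ A), s ≫ G.ε = 𝟙 (𝟭 A)) ↔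
     (∃ r : (T : A ⥤ A) ⟶ 𝟭 A, T.η ≫ r = 𝟙 (𝟭 A))) := by
  have key : (∃ s : 𝟭 A ⟶ (G : A ⥤ A), s ≫ G.ε = 𝟙 (𝟭 A)) ↔
      ∃ r : (T : A ⥤ A) ⟶ 𝟭 A, T.η ≫ r = 𝟙 (𝟭 A) :=
    hη ▸ exists_section_iff_exists_retraction_conjugateEquiv Adjunction.id adj G.ε
  exact ⟨G.separableFunctor_cofree_iff.trans (key.trans T.separableFunctor_free_iff.symm), key⟩

/-- Let `(L,R)` be an adjoint pair of endofunctors of `A`, where `L` carries a comonad structure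
`G` and `R` the mate monad structure `T` (so that the counit `e = G.ε` of `L` and the unit
`i = T.η` of `R` are mates: `i = Re ∘ η`).  Then the cofree functor `φ^L : A ⥤ A^L` is
separable iff the free functor `φ_R : A ⥤ A_R` is separable; explicitly, `e` has a natural
section iff `i` has a natural retraction. -/
theorem cofree_separable_iff_free_separable {A : Type*} [Category A]
    (G : Comonad A) (T : Monad A) (adj : (G : A ⥤ A) ⊣ (T : A ⥤ A))
    (hμ : T.μ = conjugateEquiv (adj.comp adj) adj G.δ)
    (hη : T.η = conjugateEquiv Adjunction.id adj G.ε) :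
    (SeparableFunctor G.cofree ↔ SeparableFunctor T.free) ∧
    ((∃ s : 𝟭 A ⟶ (G : A ⥤ A), s ≫ G.ε = 𝟙 (𝟭 A)) ↔
     (∃ r : (T : A ⥤ A) ⟶ 𝟭 A, T.η ≫ r = 𝟙 (𝟭 A))) :=
  cofree_separable_iff_free_separable_general G T adj hη
end
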